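/- For every integer p ≥ 3 and every β_0 with β*(p) < β_0 < log 2, there exists B > β_0 such that for all β > B: H_{β_0,p}(m_*(β,p)) < 0, and consequently sup_{x ∈ η_p^{−1}((β,∞))} H_{β_0,p}(x) = 0 > sup_{x ∈ (m_*(β,p), 1]} H_{β_0,p}(x); that is, for null parameters strictly between β*(p) and log 2 and all sufficiently large alternatives, the maximum pseudolikelihood test has strictly smaller Bahadur slope than the maximum likelihood test. -/

import Mathlib

/-!
Since `β₀ < log 2 = I(1)`, `H_{β₀,p}` is uniformly negative on `ε ≤ |t| ≤ 1` for some `ε < 1`;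
since `p ≥ 3`, `β₀ > 0` and `I(t) ≥ t² / 2`, it is `≤ 0` on `|t| ≤ δ` for some `δ > 0`. On the
annulus `δ ≤ |t| ≤ ε` the function `η_p` is continuous, hence bounded, so for large `β` the set
`{η_p > β}` lies in the two good regions, and its supremum `0` is approached as `t → 0⁺`, where
`η_p → ∞`. As for the maximizer `m`: comparing with a point `b ∈ (ε, 1)` shows
`β (bᵖ - mᵖ) ≤ I(b)`, so `m > ε` once `β` is large, while `m < 1` because `I` has infinite slope
at `1`. Hence `H_{β₀,p}` is uniformly negative on `[m, 1]`.
-/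

open Real Set Filter

/-- `I(x) = ½[(1+x)log(1+x) + (1−x)log(1−x)]` (with `Real.log 0 = 0`). -/
noncomputable def bahI (x : ℝ) : ℝ :=
  ((1 + x) * Real.log (1 + x) + (1 - x) * Real.log (1 - x)) / 2

/-- `H_{β,p}(x) = β xᵖ − I(x)`. -/
noncomputable def bahH (β : ℝ) (p : ℕ) (x : ℝ) : ℝ := β * x ^ p - bahI x

/-- `β*(p) = sup {β ≥ 0 : sup_{x∈[−1,1]} H_{β,p}(x) = 0}`. -/
noncomputable def betaStar (p : ℕ) : ℝ :=
  sSup {β : ℝ | 0 ≤ β ∧ sSup (bahH β p '' Set.Icc (-1 : ℝ) 1) = 0}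

/-- inverse hyperbolic tangent. -/
noncomputable def arctanh (x : ℝ) : ℝ := Real.log ((1 + x) / (1 - x)) / 2

/-- `η_p(t) = p⁻¹ t^{1−p} arctanh t` for `t ≠ 0`, and `η_p(0) = 0`. -/
noncomputable def etaFn (p : ℕ) (t : ℝ) : ℝ :=
  if t = 0 then 0 else (p : ℝ)⁻¹ * t ^ (1 - (p : ℤ)) * arctanh t

open Topology

lemma csSup_image_eq_of_tendsto {α β : Type*} [ConditionallyCompleteLinearOrder β]
    [TopologicalSpace β] [OrderTopology β] {f : α → β} {l : Filter α} [l.NeBot] {S : Set α} {b : β}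
    (hf : Tendsto f l (𝓝 b)) (hS : ∀ᶠ x in l, x ∈ S) (hle : ∀ x ∈ S, f x ≤ b) :
    sSup (f '' S) = b := by
  have hb : b ∈ closure (f '' S) :=
    mem_closure_of_tendsto hf (hS.mono fun x hx => mem_image_of_mem f hx)
  exact (isLUB_of_mem_closure (forall_mem_image.2 hle) hb).csSup_eq (closure_nonempty_iff.1 ⟨b, hb⟩)

lemma exists_gt_forall_gt_of_eventually_atTop {α : Type*} [LinearOrder α] [NoMaxOrder α]
    {P : α → Prop} (h : ∀ᶠ x in atTop, P x) (a : α) : ∃ B, a < B ∧ ∀ x, B < x → P x := by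
  have : Nonempty α := ⟨a⟩
  obtain ⟨B, hB⟩ := eventually_atTop.1 (h.and (eventually_gt_atTop a))
  exact ⟨B, (hB B le_rfl).2, fun x hx => (hB x hx.le).1⟩

lemma bahI_neg (x : ℝ) : bahI (-x) = bahI x := by
  simp only [bahI, sub_neg_eq_add, ← sub_eq_add_neg]
  ring

lemma bahI_abs (x : ℝ) : bahI |x| = bahI x := by
  rcases abs_choice x with h | h <;> simp only [h, bahI_neg]

lemma bahI_one : bahI 1 = log 2 := by norm_num [bahI]

lemma bahH_one (β : ℝ) (p : ℕ) : bahH β p 1 = β - log 2 := by simp [bahH, bahI_one]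

lemma continuous_bahI : Continuous bahI :=
  ((continuous_mul_log.comp (continuous_const.add continuous_id)).add
    (continuous_mul_log.comp (continuous_const.sub continuous_id))).div_const 2

lemma continuous_bahH (β : ℝ) (p : ℕ) : Continuous (bahH β p) :=
  (continuous_const.mul (continuous_pow p)).sub continuous_bahI

lemma hasDerivAt_bahI {x : ℝ} (hx : x ∈ Ioo (-1 : ℝ) 1) : HasDerivAt bahI (arctanh x) x := by
  have hplus : 1 + x ≠ 0 := by linarith [hx.1]
  have hminus : 1 - x ≠ 0 := by linarith [hx.2]
  have dplus := (hasDerivAt_mul_log hplus).comp x ((hasDerivAt_id x).const_add 1)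
  have dminus := (hasDerivAt_mul_log hminus).comp x ((hasDerivAt_id x).const_sub 1)
  have hI : HasDerivAt bahI (((log (1 + x) + 1) * 1 + (log (1 - x) + 1) * -1) / 2) x :=
    (dplus.add dminus).div_const 2
  convert hI using 1
  rw [arctanh, log_div hplus hminus]
  ring

lemma self_le_arctanh {x : ℝ} (hx : x ∈ Ico (0 : ℝ) 1) : x ≤ arctanh x := by
  have hsum := hasSum_log_sub_log_of_abs_lt_one (abs_lt.2 ⟨by linarith [hx.1], hx.2⟩)
  have hfirst := le_hasSum hsum 0 fun k _ => mul_nonneg (by positivity) (pow_nonneg hx.1 _)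
  rw [arctanh, log_div (by linarith [hx.1]) (by linarith [hx.2])]
  norm_num at hfirst
  linarith

lemma sq_div_two_le_bahI {x : ℝ} (hx : |x| ≤ 1) : x ^ 2 / 2 ≤ bahI x := by
  suffices hmono : MonotoneOn (fun y => bahI y - y ^ 2 / 2) (Icc 0 1) by
    have := hmono (left_mem_Icc.2 zero_le_one) ⟨abs_nonneg x, hx⟩ (abs_nonneg x)
    have h0 : bahI 0 = 0 := by norm_num [bahI]
    simpa [bahI_abs, sq_abs, h0] using this
  refine monotoneOn_of_hasDerivWithinAt_nonneg (f' := fun y => arctanh y - y) (convex_Icc 0 1)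
    (continuous_bahI.sub ((continuous_pow 2).div_const 2)).continuousOn
    (fun y hy => ?_) (fun y hy => ?_) <;> rw [interior_Icc] at hy
  · have hI := hasDerivAt_bahI ⟨by linarith [hy.1], hy.2⟩
    exact (hI.sub (by simpa using (hasDerivAt_pow 2 y).div_const 2)).hasDerivWithinAt
  · exact sub_nonneg.2 (self_le_arctanh (Ioo_subset_Ico_self hy))

lemma bahH_le_bahH_abs {β : ℝ} (hβ : 0 ≤ β) (p : ℕ) (t : ℝ) : bahH β p t ≤ bahH β p |t| := by
  rw [bahH, bahH, bahI_abs, ← abs_pow]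
  gcongr
  exact le_abs_self _

lemma bahH_nonpos_of_mul_abs_le {β t : ℝ} {p : ℕ} (hβ : 0 ≤ β) (hp : 3 ≤ p) (ht : |t| ≤ 1)
    (hβt : β * |t| ≤ 1 / 2) : bahH β p t ≤ 0 := by
  have hpow : t ^ p ≤ |t| * t ^ 2 := calc
    t ^ p ≤ |t| ^ p := (le_abs_self _).trans (abs_pow t p).le
    _ ≤ |t| ^ 3 := pow_le_pow_of_le_one (abs_nonneg t) ht hp
    _ = |t| * t ^ 2 := by rw [pow_succ', sq_abs]
  have hI := sq_div_two_le_bahI ht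
  rw [bahH]
  nlinarith [mul_le_mul_of_nonneg_left hpow hβ, mul_le_mul_of_nonneg_right hβt (sq_nonneg t)]

lemma exists_bahH_le_neg_of_le_abs {β : ℝ} (hβ : 0 ≤ β) (hβ2 : β < log 2) (p : ℕ) :
    ∃ ε ∈ Ioo (0 : ℝ) 1, ∃ c < 0, ∀ t ∈ Icc (-1 : ℝ) 1, ε ≤ |t| → bahH β p t ≤ c := by
  have hlim : Tendsto (bahH β p) (𝓝[≤] 1) (𝓝 (β - log 2)) :=
    bahH_one β p ▸ ((continuous_bahH β p).tendsto 1).mono_left nhdsWithin_le_nhds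
  obtain ⟨l, hl, hsub⟩ := mem_nhdsLE_iff_exists_Icc_subset.1
    (hlim.eventually_lt_const (u := (β - log 2) / 2) (by linarith))
  refine ⟨max l (1 / 2), ⟨by positivity, max_lt hl (by norm_num)⟩, (β - log 2) / 2, by linarith,
    fun t ht hεt => ?_⟩
  have hmem : |t| ∈ Icc l 1 := ⟨(le_max_left _ _).trans hεt, abs_le.2 ⟨ht.1, ht.2⟩⟩
  exact (bahH_le_bahH_abs hβ p t).trans (hsub hmem).le

lemma bahI_one_sub_le {s : ℝ} (hs0 : 0 < s) (hs2 : s < 2) :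
    bahI (1 - s) ≤ log 2 - s * (log 2 - log s) / 2 := by
  have : (2 - s) * log (2 - s) ≤ (2 - s) * log 2 :=
    mul_le_mul_of_nonneg_left (log_le_log (by linarith) (by linarith)) (by linarith)
  rw [bahI, show 1 + (1 - s) = 2 - s by ring, sub_sub_cancel]
  linarith

lemma not_isMaxOn_bahH_one {β : ℝ} (hβ : 0 ≤ β) (p : ℕ) :
    ¬ IsMaxOn (bahH β p) (Icc (-1 : ℝ) 1) 1 := by
  intro hmax
  -- at `1 - s` with `s = exp (-2βp)`, the entropy saving `s log (2 / s) / 2` beats the loss `βps`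
  set s := exp (-(2 * β * p))
  have hs0 : 0 < s := exp_pos _
  have hs1 : s ≤ 1 := exp_le_one_iff.2 (neg_nonpos.2 (by positivity))
  have hbern : 1 - p * s ≤ (1 - s) ^ p := by
    simpa [sub_eq_add_neg] using one_add_mul_le_pow (by linarith : -2 ≤ -s) p
  have hI := bahI_one_sub_le hs0 (by linarith)
  rw [log_exp] at hI
  have hle := isMaxOn_iff.1 hmax (1 - s) ⟨by linarith, by linarith⟩
  rw [bahH_one, bahH] at hle
  nlinarith [mul_le_mul_of_nonneg_left hbern hβ, mul_pos hs0 (by positivity : (0 : ℝ) < log 2)]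

lemma lt_of_isMaxOn_bahH {β m a b : ℝ} {p : ℕ} (hβ : 0 ≤ β) (hm0 : 0 ≤ m)
    (hm : m ∈ Icc (-1 : ℝ) 1) (hmax : IsMaxOn (bahH β p) (Icc (-1 : ℝ) 1) m)
    (hb : b ∈ Icc (-1 : ℝ) 1) (hgain : bahI b < β * (b ^ p - a ^ p)) : a < m := by
  by_contra! ham
  have hle := isMaxOn_iff.1 hmax b hb
  have hpow : β * m ^ p ≤ β * a ^ p := by gcongr
  have hIm : m ^ 2 / 2 ≤ bahI m := sq_div_two_le_bahI (abs_le.2 hm)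
  rw [bahH, bahH] at hle
  nlinarith [sq_nonneg m]

lemma inv_mul_inv_le_etaFn {p : ℕ} (hp : 3 ≤ p) {t : ℝ} (ht : t ∈ Ioo (0 : ℝ) 1) :
    (p : ℝ)⁻¹ * t⁻¹ ≤ etaFn p t := by
  obtain ⟨ht0, ht1⟩ := ht
  rw [etaFn, if_neg ht0.ne', mul_assoc]
  gcongr
  calc t⁻¹ = t ^ (-1 : ℤ) := (zpow_neg_one t).symm
    _ ≤ t ^ (1 - (p : ℤ) + 1) := zpow_le_zpow_right_of_le_one₀ ht0 ht1.le (by omega)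
    _ = t ^ (1 - (p : ℤ)) * t := zpow_add_one₀ ht0.ne' _
    _ ≤ t ^ (1 - (p : ℤ)) * arctanh t :=
      mul_le_mul_of_nonneg_left (self_le_arctanh ⟨ht0.le, ht1⟩) (zpow_pos ht0 _).le

lemma tendsto_etaFn_nhdsGT_zero {p : ℕ} (hp : 3 ≤ p) : Tendsto (etaFn p) (𝓝[>] 0) atTop := by
  have hp0 : (0 : ℝ) < (p : ℝ)⁻¹ := inv_pos.2 (Nat.cast_pos.2 (by omega))
  refine tendsto_atTop_mono' _ ?_ (tendsto_inv_nhdsGT_zero.const_mul_atTop hp0)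
  filter_upwards [Ioo_mem_nhdsGT one_pos] with t ht using inv_mul_inv_le_etaFn hp ht

lemma continuousOn_arctanh : ContinuousOn arctanh (Ioo (-1) 1) := by
  unfold arctanh
  refine (ContinuousOn.log ?_ fun t ht => ?_).div_const 2
  · exact (continuousOn_const.add continuousOn_id).div (continuousOn_const.sub continuousOn_id)
      fun t ht => by linarith [ht.2]
  · exact (div_pos (by linarith [ht.1]) (by linarith [ht.2])).ne'

lemma exists_etaFn_le_of_mem_annulus (p : ℕ) {δ ε : ℝ} (hδ : 0 < δ) (hε : ε < 1) :
    ∃ B, ∀ t, δ ≤ |t| → |t| ≤ ε → etaFn p t ≤ B := by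
  set K := Icc (-ε) ε \ Ioo (-δ) δ
  have hK : ∀ t ∈ K, t ≠ 0 ∧ t ∈ Ioo (-1 : ℝ) 1 := fun t ⟨⟨h1, h2⟩, h3⟩ =>
    ⟨fun h => h3 (by simp [h, hδ]), by linarith, by linarith⟩
  have hcont : ContinuousOn (etaFn p) K := by
    refine ContinuousOn.congr (f := fun t => (p : ℝ)⁻¹ * t ^ (1 - (p : ℤ)) * arctanh t) ?_
      fun t ht => if_neg (hK t ht).1
    exact (continuousOn_const.mul (continuousOn_id.zpow₀ _ fun t ht => Or.inl (hK t ht).1)).mul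
      (continuousOn_arctanh.mono fun t ht => (hK t ht).2)
  obtain ⟨B, hB⟩ := (isCompact_Icc.diff isOpen_Ioo).bddAbove_image hcont
  exact ⟨B, fun t h1 h2 => hB ⟨t, ⟨abs_le.1 h2, fun h => (abs_lt.2 h).not_ge h1⟩, rfl⟩⟩

lemma sSup_bahH_image_etaFn_gt {β₀ β : ℝ} {p : ℕ} (hp : 3 ≤ p)
    (hle : ∀ t ∈ Icc (-1 : ℝ) 1, β < etaFn p t → bahH β₀ p t ≤ 0) :
    sSup (bahH β₀ p '' {t ∈ Icc (-1 : ℝ) 1 | β < etaFn p t}) = 0 := by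
  have h0 : bahH β₀ p 0 = 0 := by simp [bahH, bahI, zero_pow (by omega : p ≠ 0)]
  have hlim : Tendsto (bahH β₀ p) (𝓝[>] 0) (𝓝 0) := by
    simpa only [h0] using ((continuous_bahH β₀ p).continuousWithinAt (s := Ioi 0) (x := 0)).tendsto
  refine csSup_image_eq_of_tendsto hlim ?_ fun t ht => hle t ht.1 ht.2
  filter_upwards [Ioo_mem_nhdsGT one_pos, (tendsto_etaFn_nhdsGT_zero hp).eventually_gt_atTop β]
    with t ht hη using ⟨⟨by linarith [ht.1], ht.2.le⟩, hη⟩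

/-- For `p ≥ 3` and `β*(p) < β₀ < log 2`, there is `B > β₀` such that for all `β > B`,
writing `m = m_*(β,p)` for the positive global maximizer of `H_{β,p}` on `[−1,1]`:
`H_{β₀,p}(m) < 0`, and consequently
`sup_{x ∈ η_p⁻¹((β,∞))} H_{β₀,p}(x) = 0 > sup_{x ∈ (m, 1]} H_{β₀,p}(x)`. -/
theorem statement10 (p : ℕ) (hp : 3 ≤ p) (β₀ : ℝ) (h0 : betaStar p < β₀)
    (h1 : β₀ < Real.log 2) :
    ∃ B, β₀ < B ∧ ∀ β, B < β →
      ∀ m : ℝ, 0 < m → m ∈ Set.Icc (-1 : ℝ) 1 →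
        IsMaxOn (bahH β p) (Set.Icc (-1 : ℝ) 1) m →
          bahH β₀ p m < 0 ∧
          sSup (bahH β₀ p '' {t ∈ Set.Icc (-1 : ℝ) 1 | β < etaFn p t}) = 0 ∧
          sSup (bahH β₀ p '' Set.Ioc m 1) < 0 := by
  have hβ₀ : 0 < β₀ := (Real.sSup_nonneg fun β hβ => hβ.1).trans_lt h0
  obtain ⟨ε, ⟨hε0, hε1⟩, c, hc, houter⟩ := exists_bahH_le_neg_of_le_abs hβ₀.le h1 p
  set δ := min ε (2 * β₀)⁻¹
  have hinner : ∀ t, |t| ≤ δ → bahH β₀ p t ≤ 0 := fun t ht =>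
    bahH_nonpos_of_mul_abs_le hβ₀.le hp (ht.trans ((min_le_left _ _).trans hε1.le)) <| calc
      β₀ * |t| ≤ β₀ * (2 * β₀)⁻¹ := by gcongr; exact ht.trans (min_le_right _ _)
      _ = 1 / 2 := by field_simp
  obtain ⟨B₁, hB₁⟩ := exists_etaFn_le_of_mem_annulus p (δ := δ) (lt_min hε0 (by positivity)) hε1
  obtain ⟨b, hεb, hb1⟩ := exists_between hε1
  have hgap : 0 < b ^ p - ε ^ p := sub_pos.2 (pow_lt_pow_left₀ hεb hε0.le (by omega))
  refine exists_gt_forall_gt_of_eventually_atTop ?_ β₀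
  filter_upwards [eventually_gt_atTop 0, eventually_gt_atTop B₁,
    eventually_gt_atTop (bahI b / (b ^ p - ε ^ p))] with β hβ hβB₁ hβb m hm0 hm hmax
  have hεm : ε < m := lt_of_isMaxOn_bahH hβ.le hm0.le hm hmax ⟨by linarith, by linarith⟩
    ((div_lt_iff₀ hgap).1 hβb)
  have hm1 : m < 1 := hm.2.lt_of_ne fun h => not_isMaxOn_bahH_one hβ.le p (h ▸ hmax)
  have houter' : ∀ t ∈ Icc m 1, bahH β₀ p t ≤ c := fun t ht =>
    houter t ⟨by linarith [ht.1], ht.2⟩ (by rw [abs_of_pos (hm0.trans_le ht.1)]; linarith [ht.1])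
  refine ⟨(houter' m ⟨le_rfl, hm.2⟩).trans_lt hc, sSup_bahH_image_etaFn_gt hp fun t ht hηt => ?_,
    (csSup_le ((nonempty_Ioc.2 hm1).image _)
      (forall_mem_image.2 fun t ht => houter' t (Ioc_subset_Icc_self ht))).trans_lt hc⟩
  rcases le_or_gt |t| δ with htδ | htδ
  · exact hinner t htδ
  rcases le_or_gt ε |t| with htε | htε
  · exact (houter t ht htε).trans hc.le
  · exact absurd (hB₁ t htδ.le htε.le) (by linarith)
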